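/- Let A be a Lie algebra over ℂ, regarded also as a Lie algebra over ℝ by restriction of scalars. Let g₁, g₂ ⊆ A be ℝ-Lie subalgebras with g₁ ∩ i·g₁ = {0} and g₂ ∩ i·g₂ = {0}, and let h be an ℝ-Lie subalgebra with h ⊆ g₁ and h ⊆ g₂. Suppose the complex Lie subalgebra h_ℂ of A whose underlying set is span_ℂ(h) is a Cartan subalgebra of A. Then h is simultaneously a Cartan subalgebra of g₁ and a Cartan subalgebra of g₂ (nilpotent and self-normalizing in each). In particular, g₁ and g₂ possess Cartan subalgebras of the same real dimension. (Applied to g₁ = 𝔨 the maximal compact subalgebra and g₂ = 𝔤_u = 𝔨 ⊕ i𝔭 the compact dual of a Hermitian semisimple Lie algebra 𝔤 = 𝔨 ⊕ 𝔭 inside A = 𝔤 ⊗ ℂ, this yields rk(G_u) = rk(K).) -/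

import Mathlib

open Pointwise

/-- A complex Lie algebra is a real Lie algebra by restriction of scalars. -/
instance LieAlgebra.complexToReal {A : Type*} [LieRing A] [LieAlgebra ℂ A] :
    LieAlgebra ℝ A where
  lie_smul t x y := lie_smul (t : ℂ) x y

/-- Real lower central series is contained in the complex one. -/
lemma real_lcs_le_complex_lcs {L : Type*} [LieRing L] [LieAlgebra ℂ L] (k : ℕ) :
    ((LieModule.lowerCentralSeries ℝ L L k : LieSubmodule ℝ L L) : Set L) ⊆
      ((LieModule.lowerCentralSeries ℂ L L k : LieSubmodule ℂ L L) : Set L) := by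
  induction k with
  | zero => simp
  | succ k ih =>
    intro m hm
    -- restrict the complex ideal to a real Lie submodule
    let J : LieSubmodule ℝ L L :=
      { carrier := ((LieModule.lowerCentralSeries ℂ L L (k+1) : LieSubmodule ℂ L L) : Set L)
        add_mem' := fun ha hb => add_mem ha hb
        zero_mem' := zero_mem _
        smul_mem' := fun r x hx => by
          have : (r : ℂ) • x ∈ (LieModule.lowerCentralSeries ℂ L L (k+1) : LieSubmodule ℂ L L) :=
            Submodule.smul_mem _ _ hx
          simpa [Complex.coe_smul] using this
        lie_mem := fun {x m} hm => LieSubmodule.lie_mem _ hm }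
    have hle : LieModule.lowerCentralSeries ℝ L L (k+1) ≤ J := by
      rw [LieModule.lowerCentralSeries_succ, LieSubmodule.lie_le_iff]
      intro x _ m hm
      have h2 : ⁅x, m⁆ ∈ ⁅(⊤ : LieIdeal ℂ L), LieModule.lowerCentralSeries ℂ L L k⁆ :=
        LieSubmodule.lie_mem_lie trivial (ih hm)
      rw [← LieModule.lowerCentralSeries_succ] at h2
      exact h2
    exact hle hm

lemma isNilpotent_real_of_complex {L : Type*} [LieRing L] [LieAlgebra ℂ L]
    [LieRing.IsNilpotent L] : LieRing.IsNilpotent L := by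
  infer_instance

lemma mem_span_complex_decomp {A : Type*} [LieRing A] [LieAlgebra ℂ A]
    (h : LieSubalgebra ℝ A) {x : A} (hx : x ∈ Submodule.span ℂ (h : Set A)) :
    ∃ a ∈ h, ∃ b ∈ h, x = a + Complex.I • b := by
  induction hx using Submodule.span_induction with
  | mem x hxs => exact ⟨x, hxs, 0, h.zero_mem, by simp⟩
  | zero => exact ⟨0, h.zero_mem, 0, h.zero_mem, by simp⟩
  | add x y hx hy ihx ihy =>
    obtain ⟨a, ha, b, hb, rfl⟩ := ihx
    obtain ⟨a', ha', b', hb', rfl⟩ := ihy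
    exact ⟨a + a', h.add_mem ha ha', b + b', h.add_mem hb hb', by
      rw [smul_add]; abel⟩
  | smul c x hx ihx =>
    obtain ⟨a, ha, b, hb, rfl⟩ := ihx
    refine ⟨c.re • a - c.im • b, sub_mem (h.smul_mem _ ha) (h.smul_mem _ hb),
      c.im • a + c.re • b, add_mem (h.smul_mem _ ha) (h.smul_mem _ hb), ?_⟩
    have e1 : (c.re : ℝ) • a = (c.re : ℂ) • a := (Complex.coe_smul _ _).symm
    have e2 : (c.im : ℝ) • b = (c.im : ℂ) • b := (Complex.coe_smul _ _).symm
    have e3 : (c.im : ℝ) • a = (c.im : ℂ) • a := (Complex.coe_smul _ _).symm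
    have e4 : (c.re : ℝ) • b = (c.re : ℂ) • b := (Complex.coe_smul _ _).symm
    rw [e1, e2, e3, e4, smul_add, smul_add, smul_smul, smul_smul, smul_smul]
    match_scalars
    · linear_combination -Complex.re_add_im c
    · linear_combination (-Complex.I) * Complex.re_add_im c + (c.im : ℂ) * Complex.I_sq

lemma normalizer_in_g {A : Type*} [LieRing A] [LieAlgebra ℂ A]
    (g h : LieSubalgebra ℝ A) (hhg : h ≤ g)
    (hg : (g : Set A) ∩ (Complex.I • (g : Set A)) = {0})
    (hC : LieSubalgebra ℂ A)
    (hC_carrier : (hC : Set A) = (Submodule.span ℂ (h : Set A) : Set A))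
    (hC_cartan : hC.IsCartanSubalgebra) :
    {x : A | x ∈ g ∧ ∀ y ∈ h, ⁅x, y⁆ ∈ h} = (h : Set A) := by
  ext x
  constructor
  · rintro ⟨hxg, hxn⟩
    have hstable : ∀ y ∈ Submodule.span ℂ (h : Set A),
        ⁅x, y⁆ ∈ Submodule.span ℂ (h : Set A) := by
      intro y hy'
      induction hy' using Submodule.span_induction with
      | mem z hz => exact Submodule.subset_span (hxn z hz)
      | zero => simp
      | add u v hu hv ihu ihv => rw [lie_add]; exact add_mem ihu ihv
      | smul c u hu ihu => rw [lie_smul]; exact Submodule.smul_mem _ _ ihu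
    have hxC : x ∈ Submodule.span ℂ (h : Set A) := by
      have hmem : x ∈ hC.normalizer := by
        rw [LieSubalgebra.mem_normalizer_iff]
        intro y hy
        have hy' : y ∈ Submodule.span ℂ (h : Set A) := by
          have : y ∈ (hC : Set A) := hy
          rwa [hC_carrier] at this
        show ⁅x, y⁆ ∈ (hC : Set A)
        rw [hC_carrier]
        exact hstable y hy'
      rw [hC_cartan.self_normalizing] at hmem
      have : x ∈ (hC : Set A) := hmem
      rwa [hC_carrier] at this
    obtain ⟨a, ha, b, hb, rfl⟩ := mem_span_complex_decomp h hxC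
    have hIb : Complex.I • b ∈ (g : Set A) ∩ (Complex.I • (g : Set A)) := by
      constructor
      · have : a + Complex.I • b - a ∈ g := sub_mem hxg (hhg ha)
        simpa using this
      · exact ⟨b, hhg hb, rfl⟩
    rw [hg] at hIb
    have hb0 : b = 0 := by
      have : Complex.I • b = 0 := hIb
      simpa [Complex.I_ne_zero] using this
    simpa [hb0] using ha
  · intro hx
    exact ⟨hhg hx, fun y hy => h.lie_mem hx hy⟩


/-- let `A` be a complex Lie algebra, `g₁, g₂ ⊆ A` real Lie subalgebras
with `g₁ ∩ i·g₁ = {0}` and `g₂ ∩ i·g₂ = {0}`, and `h` a real Lie subalgebra contained in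
both.  If the complex Lie subalgebra `h_ℂ` of `A` with underlying set `span_ℂ(h)` is a
Cartan subalgebra of `A`, then `h` is simultaneously a Cartan subalgebra of `g₁` and of
`g₂`: it is nilpotent and self-normalizing in each.  (In particular, `g₁` and `g₂` possess
Cartan subalgebras of the same real dimension, namely `h` itself.) -/
theorem statement11 {A : Type*} [LieRing A] [LieAlgebra ℂ A]
    (g₁ g₂ h : LieSubalgebra ℝ A) (hhg₁ : h ≤ g₁) (hhg₂ : h ≤ g₂)
    (hg₁ : (g₁ : Set A) ∩ (Complex.I • (g₁ : Set A)) = {0})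
    (hg₂ : (g₂ : Set A) ∩ (Complex.I • (g₂ : Set A)) = {0})
    (hC : LieSubalgebra ℂ A)
    (hC_carrier : (hC : Set A) = (Submodule.span ℂ (h : Set A) : Set A))
    (hC_cartan : hC.IsCartanSubalgebra) :
    LieRing.IsNilpotent h ∧
    {x : A | x ∈ g₁ ∧ ∀ y ∈ h, ⁅x, y⁆ ∈ h} = (h : Set A) ∧
    {x : A | x ∈ g₂ ∧ ∀ y ∈ h, ⁅x, y⁆ ∈ h} = (h : Set A) := by
  refine ⟨?_, normalizer_in_g g₁ h hhg₁ hg₁ hC hC_carrier hC_cartan,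
    normalizer_in_g g₂ h hhg₂ hg₂ hC hC_carrier hC_cartan⟩
  haveI : LieRing.IsNilpotent hC := hC_cartan.nilpotent
  haveI : LieRing.IsNilpotent hC := isNilpotent_real_of_complex
  have hsub : ∀ x : h, (x : A) ∈ hC := by
    intro x
    show (x : A) ∈ (hC : Set A)
    rw [hC_carrier]
    exact Submodule.subset_span x.2
  let f : h →ₗ⁅ℝ⁆ hC :=
    { toFun := fun x => ⟨x, hsub x⟩
      map_add' := fun x y => rfl
      map_smul' := fun r x => Subtype.ext (by
        show ((r • x : h) : A) = ((r • (⟨x, hsub x⟩ : hC) : hC) : A)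
        rfl)
      map_lie' := fun {x y} => rfl }
  have finj : Function.Injective f := by
    intro x y hxy
    have h1 : ((f x : hC) : A) = ((f y : hC) : A) := Subtype.ext_iff.mp hxy
    exact Subtype.ext h1
  exact Function.Injective.lieAlgebra_isNilpotent (f := f) finj
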